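/- Let (Z,ζ,z) be a pointed metric space, X, Y ⊆ Z Borel sets, μ a locally finite Borel measure on X and ν one on Y. For 0 < ε < 1/2 suppose f : X ∩ B(z,1/ε) → Y is a Borel function with ζ(f(x),x) ≤ ε for all x ∈ X ∩ B(z,1/ε). Then for any 0 < r ≤ 1/ε − ε and L > 0, |F^{L,r}_z(f_#μ, ν) − F^{L,r}_z(μ, ν)| ≤ ε·L·μ(B(z, r+ε)). -/

import Mathlib

open MeasureTheory Metric

noncomputable def FLr {Z : Type*} [MetricSpace Z] [MeasurableSpace Z]
    (z : Z) (L r : ℝ) (μ ν : Measure Z) : ℝ :=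
  sSup {t : ℝ | ∃ g : Z → ℝ, (∀ y, g y ∈ Set.Icc (-1:ℝ) 1) ∧
    LipschitzWith (Real.toNNReal L) g ∧ tsupport g ⊆ closedBall z r ∧
    t = (∫ y, g y ∂μ) - ∫ y, g y ∂ν}

lemma aux_int {Z : Type*} [MetricSpace Z] [MeasurableSpace Z] [BorelSpace Z]
    (z : Z) (r : ℝ) (ρ : Measure Z) (hρ : ρ (closedBall z r) < ⊤)
    (g : Z → ℝ) (hg1 : ∀ y, g y ∈ Set.Icc (-1:ℝ) 1) (hgc : Continuous g)
    (hgs : tsupport g ⊆ closedBall z r) :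
    Integrable g ρ ∧ |∫ y, g y ∂ρ| ≤ (ρ (closedBall z r)).toReal := by
  have hb : ∀ x, ‖g x‖ ≤ (closedBall z r).indicator (fun _ => (1:ℝ)) x := by
    intro x
    by_cases hx : x ∈ closedBall z r
    · rw [Set.indicator_of_mem hx, Real.norm_eq_abs, abs_le]
      exact ⟨(hg1 x).1, (hg1 x).2⟩
    · have : g x = 0 := image_eq_zero_of_notMem_tsupport (fun h => hx (hgs h))
      simp [hx, this]
  have hind : Integrable ((closedBall z r).indicator (fun _ => (1:ℝ))) ρ :=
    (integrable_indicator_iff measurableSet_closedBall).2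
      (integrableOn_const hρ.ne)
  have hInt : Integrable g ρ := by
    refine ⟨hgc.aestronglyMeasurable, hind.hasFiniteIntegral.mono ?_⟩
    refine Filter.Eventually.of_forall fun x => ?_
    refine (hb x).trans ?_
    by_cases hx : x ∈ closedBall z r <;> simp [hx]
  refine ⟨hInt, ?_⟩
  have := norm_integral_le_of_norm_le hind (Filter.Eventually.of_forall hb)
  rwa [integral_indicator_const (1:ℝ) measurableSet_closedBall, smul_eq_mul,
    mul_one, Real.norm_eq_abs] at this

theorem stmt_11 {Z : Type*} [MetricSpace Z] [MeasurableSpace Z] [BorelSpace Z]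
    (z : Z) (X Y : Set Z) (hXm : MeasurableSet X) (hYm : MeasurableSet Y)
    (μ ν : Measure Z)
    (hμ : ∀ (w : Z) (s : ℝ), μ (closedBall w s) < ⊤)
    (hν : ∀ (w : Z) (s : ℝ), ν (closedBall w s) < ⊤)
    (hμX : μ Xᶜ = 0) (hνY : ν Yᶜ = 0)
    (ε : ℝ) (hε0 : 0 < ε) (hε : ε < 1/2)
    (f : Z → Z) (hfm : Measurable f)
    (hf : ∀ w ∈ X ∩ closedBall z (1/ε), f w ∈ Y ∧ dist (f w) w ≤ ε)
    (r L : ℝ) (hr0 : 0 < r) (hr : r ≤ 1/ε - ε) (hL : 0 < L) :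
    |FLr z L r ((μ.restrict (X ∩ closedBall z (1/ε))).map f) ν - FLr z L r μ ν|
      ≤ ε * L * (μ (closedBall z (r + ε))).toReal := by
  set A := X ∩ closedBall z (1/ε) with hA
  set C := ε * L * (μ (closedBall z (r + ε))).toReal with hCdef
  have hAm : MeasurableSet A := hXm.inter measurableSet_closedBall
  have hAfin : μ A < ⊤ :=
    lt_of_le_of_lt (measure_mono Set.inter_subset_right) (hμ z (1/ε))
  set μ' := (μ.restrict A).map f with hμ'
  haveI hresfin : IsFiniteMeasure (μ.restrict A) :=
    ⟨by rwa [Measure.restrict_apply_univ]⟩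
  haveI hμ'fin : IsFiniteMeasure μ' := by
    constructor
    rw [hμ', Measure.map_apply hfm MeasurableSet.univ, Set.preimage_univ,
      Measure.restrict_apply_univ]
    exact hAfin
  have hr1ε : r ≤ 1/ε := hr.trans (by linarith)
  have hC0 : 0 ≤ C := by
    apply mul_nonneg (by positivity) ENNReal.toReal_nonneg
  -- key estimate
  have key : ∀ g : Z → ℝ, (∀ y, g y ∈ Set.Icc (-1:ℝ) 1) →
      LipschitzWith (Real.toNNReal L) g → tsupport g ⊆ closedBall z r →
      |(∫ y, g y ∂μ') - ∫ y, g y ∂μ| ≤ C := by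
    intro g hg1 hgl hgs
    have hgc : Continuous g := hgl.continuous
    have h1 : (∫ y, g y ∂μ') = ∫ x, g (f x) ∂(μ.restrict A) :=
      integral_map hfm.aemeasurable hgc.aestronglyMeasurable
    have hXae : ∀ᵐ x ∂μ, x ∈ X := by
      rw [MeasureTheory.ae_iff]
      exact hμX
    have h2 : (∫ y, g y ∂μ) = ∫ x in A, g x ∂μ := by
      refine (setIntegral_eq_integral_of_ae_compl_eq_zero ?_).symm
      filter_upwards [hXae] with x hx hnA
      have hxball : x ∉ closedBall z (1/ε) := fun h => hnA ⟨hx, h⟩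
      have : x ∉ closedBall z r := fun h => hxball (closedBall_subset_closedBall hr1ε h)
      exact image_eq_zero_of_notMem_tsupport (fun h => this (hgs h))
    have hgint : Integrable g (μ.restrict A) := by
      refine Integrable.mono' (integrable_const 1) hgc.aestronglyMeasurable ?_
      refine Filter.Eventually.of_forall fun x => ?_
      rw [Real.norm_eq_abs, abs_le]; exact ⟨(hg1 x).1, (hg1 x).2⟩
    have hgfint : Integrable (fun x => g (f x)) (μ.restrict A) := by
      refine Integrable.mono' (integrable_const 1)
        (hgc.measurable.comp hfm).aestronglyMeasurable ?_
      refine Filter.Eventually.of_forall fun x => ?_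
      rw [Real.norm_eq_abs, abs_le]; exact ⟨(hg1 _).1, (hg1 _).2⟩
    have h3 : (∫ y, g y ∂μ') - ∫ y, g y ∂μ
        = ∫ x in A, (g (f x) - g x) ∂μ := by
      rw [h1, h2, integral_sub hgfint hgint]
    rw [h3]
    have hindint : Integrable ((closedBall z (r+ε)).indicator (fun _ => ε * L))
        (μ.restrict A) :=
      (integrable_indicator_iff measurableSet_closedBall).2
        (integrableOn_const (measure_lt_top _ _).ne)
    have hbound : ∀ᵐ x ∂(μ.restrict A),
        ‖g (f x) - g x‖ ≤ (closedBall z (r+ε)).indicator (fun _ => ε * L) x := by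
      filter_upwards [ae_restrict_mem hAm] with x hxA
      by_cases hx : x ∈ closedBall z (r+ε)
      · rw [Set.indicator_of_mem hx, Real.norm_eq_abs]
        have hd : dist (g (f x)) (g x) ≤ L * dist (f x) x := by
          have := hgl.dist_le_mul (f x) x
          rwa [Real.coe_toNNReal L hL.le] at this
        rw [Real.dist_eq] at hd
        calc |g (f x) - g x| ≤ L * dist (f x) x := hd
          _ ≤ L * ε := by
              have := (hf x hxA).2
              nlinarith
          _ = ε * L := mul_comm _ _
      · rw [Set.indicator_of_notMem hx]
        have hxd : r + ε < dist x z := by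
          by_contra h
          exact hx (mem_closedBall.2 (not_lt.1 h))
        have hgx : g x = 0 := by
          apply image_eq_zero_of_notMem_tsupport
          intro h
          have := mem_closedBall.1 (hgs h)
          linarith
        have hgfx : g (f x) = 0 := by
          apply image_eq_zero_of_notMem_tsupport
          intro h
          have h1 : dist (f x) z ≤ r := mem_closedBall.1 (hgs h)
          have h2 : dist (f x) x ≤ ε := (hf x hxA).2
          have h3 : dist x z ≤ dist x (f x) + dist (f x) z := dist_triangle _ _ _
          rw [dist_comm x (f x)] at h3
          linarith
        simp [hgx, hgfx]
    have := norm_integral_le_of_norm_le hindint hbound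
    rw [Real.norm_eq_abs] at this
    refine this.trans ?_
    rw [integral_indicator_const _ measurableSet_closedBall, smul_eq_mul]
    have hle : ((μ.restrict A) (closedBall z (r+ε))).toReal
        ≤ (μ (closedBall z (r+ε))).toReal := by
      apply ENNReal.toReal_mono (hμ z (r+ε)).ne
      exact Measure.restrict_le_self _
    calc ((μ.restrict A) (closedBall z (r+ε))).toReal * (ε * L)
        ≤ (μ (closedBall z (r+ε))).toReal * (ε * L) := by
          apply mul_le_mul_of_nonneg_right hle (by positivity)
      _ = C := by ring
  -- set descriptions
  set S' := {t : ℝ | ∃ g : Z → ℝ, (∀ y, g y ∈ Set.Icc (-1:ℝ) 1) ∧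
    LipschitzWith (Real.toNNReal L) g ∧ tsupport g ⊆ closedBall z r ∧
    t = (∫ y, g y ∂μ') - ∫ y, g y ∂ν} with hS'
  set S := {t : ℝ | ∃ g : Z → ℝ, (∀ y, g y ∈ Set.Icc (-1:ℝ) 1) ∧
    LipschitzWith (Real.toNNReal L) g ∧ tsupport g ⊆ closedBall z r ∧
    t = (∫ y, g y ∂μ) - ∫ y, g y ∂ν} with hS
  have hzero : ∀ ρ : Measure Z, (0:ℝ) = (∫ y, (fun _ : Z => (0:ℝ)) y ∂ρ)
      - ∫ y, (fun _ : Z => (0:ℝ)) y ∂ν := by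
    intro ρ; simp
  have hzmem : (∀ y : Z, (fun _ : Z => (0:ℝ)) y ∈ Set.Icc (-1:ℝ) 1) ∧
      LipschitzWith (Real.toNNReal L) (fun _ : Z => (0:ℝ)) ∧
      tsupport (fun _ : Z => (0:ℝ)) ⊆ closedBall z r := by
    refine ⟨fun y => ⟨by norm_num, by norm_num⟩,
      (LipschitzWith.const 0).weaken zero_le, ?_⟩
    have : tsupport (fun _ : Z => (0:ℝ)) = ∅ := by
      simp [tsupport, Function.support]
    simp [this]
  have hne' : S'.Nonempty := ⟨0, ⟨fun _ => 0, hzmem.1, hzmem.2.1, hzmem.2.2, hzero μ'⟩⟩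
  have hne : S.Nonempty := ⟨0, ⟨fun _ => 0, hzmem.1, hzmem.2.1, hzmem.2.2, hzero μ⟩⟩
  have hbdd' : BddAbove S' := by
    refine ⟨(μ' (closedBall z r)).toReal + (ν (closedBall z r)).toReal, ?_⟩
    rintro t ⟨g, hg1, hgl, hgs, rfl⟩
    have h1 := (aux_int z r μ' (measure_lt_top _ _) g hg1 hgl.continuous hgs).2
    have h2 := (aux_int z r ν (hν z r) g hg1 hgl.continuous hgs).2
    have := abs_le.1 h1
    have := abs_le.1 h2
    linarith [(abs_le.1 h1).2, (abs_le.1 h2).1]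
  have hbdd : BddAbove S := by
    refine ⟨(μ (closedBall z r)).toReal + (ν (closedBall z r)).toReal, ?_⟩
    rintro t ⟨g, hg1, hgl, hgs, rfl⟩
    have h1 := (aux_int z r μ (hμ z r) g hg1 hgl.continuous hgs).2
    have h2 := (aux_int z r ν (hν z r) g hg1 hgl.continuous hgs).2
    linarith [(abs_le.1 h1).2, (abs_le.1 h2).1]
  have hF' : FLr z L r μ' ν = sSup S' := rfl
  have hF : FLr z L r μ ν = sSup S := rfl
  rw [hF', hF, abs_sub_le_iff]
  constructor
  · rw [sub_le_iff_le_add]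
    refine csSup_le hne' ?_
    rintro t ⟨g, hg1, hgl, hgs, rfl⟩
    have hk := abs_le.1 (key g hg1 hgl hgs)
    have hmem : (∫ y, g y ∂μ) - ∫ y, g y ∂ν ∈ S := ⟨g, hg1, hgl, hgs, rfl⟩
    have := le_csSup hbdd hmem
    linarith [hk.2]
  · rw [sub_le_iff_le_add]
    refine csSup_le hne ?_
    rintro t ⟨g, hg1, hgl, hgs, rfl⟩
    have hk := abs_le.1 (key g hg1 hgl hgs)
    have hmem : (∫ y, g y ∂μ') - ∫ y, g y ∂ν ∈ S' := ⟨g, hg1, hgl, hgs, rfl⟩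
    have := le_csSup hbdd' hmem
    linarith [hk.1]
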